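/- Suppose t ≥ 2 and P is a finite poset with sat*([t]^n, P) = O(1) as n → ∞. Then there exists N such that the function n ↦ sat*([t]^n, P) is constant on integers n > N. -/

import Mathlib

open Filter

/-- An induced copy of the poset `P` inside the family `F`. -/
def InducedCopy (P : Type) [PartialOrder P] {α : Type} [PartialOrder α]
    (F : Set α) : Prop :=
  ∃ φ : P → α, Function.Injective φ ∧ (∀ x, φ x ∈ F) ∧ ∀ x y, φ x ≤ φ y ↔ x ≤ y

/-- `F` is induced `P`-free. -/
def PFree (P : Type) [PartialOrder P] {α : Type} [PartialOrder α] (F : Set α) : Prop :=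
  ¬ InducedCopy P F

/-- `F` is induced `P`-free and induced `P`-saturated. -/
def PSaturated (P : Type) [PartialOrder P] {α : Type} [PartialOrder α] (F : Set α) : Prop :=
  PFree P F ∧ ∀ g ∉ F, InducedCopy P (insert g F)

/-- The lifting operator `L_i`, copying coordinate `i` into a new last coordinate. -/
def lift {t n : ℕ} (i : Fin n) (f : Fin n → Fin t) : Fin (n + 1) → Fin t :=
  Fin.snoc f (f i)

/-- The coordinate-dropping operator `D_i`. -/
def drop {t n : ℕ} (i : Fin (n + 1)) (f : Fin (n + 1) → Fin t) : Fin n → Fin t :=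
  fun x => f (i.succAbove x)

/-- Coordinate `i` is separating for `F`. -/
def Separating {t n : ℕ} (F : Set (Fin n → Fin t)) (i : Fin n) : Prop :=
  ∃ f ∈ F, ∃ f' ∈ F, f ≠ f' ∧ (∀ x, x ≠ i → f x ≤ f' x) ∧ f' i < f i

/-- The induced saturation number `sat*([t]^n, P)`. -/
noncomputable def satStar (t n : ℕ) (P : Type) [PartialOrder P] : ℕ :=
  sInf {m | ∃ F : Set (Fin n → Fin t), PSaturated P F ∧ F.ncard = m}

/-- The antichain on `k` elements. -/
def AC (k : ℕ) := Fin k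

instance (k : ℕ) : PartialOrder (AC k) where
  le := Eq
  le_refl _ := rfl
  le_trans _ _ _ h h' := Eq.trans h h'
  le_antisymm _ _ h _ := h

/-- The unique cover twin property. -/
def UCTP (P : Type) [PartialOrder P] : Prop :=
  ∀ x y : P, y ⋖ x → ∃ y', y' ≠ y ∧ y' ≠ x ∧ y' ⋖ x

/-
If `sat*([t]^n, P) ≤ C` for all `n`, take a minimum saturated family `F` in `[t]^(n+1)` with
`n ≥ C²`. A coordinate `i` is separating when two members of `F` are comparable off `i` but
disagree at `i`; each separating coordinate is witnessed by an ordered pair of members, and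
distinct coordinates need distinct pairs, so some coordinate is not separating. Deleting it is
an order embedding on `F`, and it maps `F` onto a saturated family of `[t]^n` of the same size:
lift a point `h` outside the image by inserting, at `i`, the largest value at `i` among the
members lying below `h`; then `i` is still not separating for `F` plus the lift, so the copy of
`P` that the lift creates maps to a copy in the image plus `h`.
Hence `sat*([t]^n, P)` is eventually non-decreasing; being bounded, it is eventually constant.
-/

section InducedCopy

variable {P α β : Type} [PartialOrder P] [PartialOrder α] [PartialOrder β]

lemma injOn_of_forall_le_iff {F : Set α} {g : α → β}
    (hg : ∀ a ∈ F, ∀ b ∈ F, g a ≤ g b ↔ a ≤ b) : Set.InjOn g F :=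
  fun a ha b hb hab => le_antisymm ((hg a ha b hb).mp hab.le) ((hg b hb a ha).mp hab.ge)

lemma inducedCopy_image_iff {F : Set α} {g : α → β}
    (hg : ∀ a ∈ F, ∀ b ∈ F, g a ≤ g b ↔ a ≤ b) :
    InducedCopy P (g '' F) ↔ InducedCopy P F := by
  constructor
  · rintro ⟨φ, hφinj, hφF, hφ⟩
    choose ψ hψF hψ using hφF
    refine ⟨ψ, fun a b hab => hφinj ?_, hψF, fun a b => ?_⟩
    · rw [← hψ a, ← hψ b, hab]
    · rw [← hφ, ← hψ a, ← hψ b, hg _ (hψF a) _ (hψF b)]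
  · rintro ⟨φ, hφinj, hφF, hφ⟩
    exact ⟨g ∘ φ, fun a b hab => hφinj (injOn_of_forall_le_iff hg (hφF a) (hφF b) hab),
      fun x => Set.mem_image_of_mem g (hφF x),
      fun a b => (hg _ (hφF a) _ (hφF b)).trans (hφ a b)⟩

lemma inducedCopy_of_isEmpty [IsEmpty P] (F : Set α) : InducedCopy P F :=
  ⟨isEmptyElim, fun a => isEmptyElim a, isEmptyElim, isEmptyElim⟩

lemma pFree_empty [Nonempty P] : PFree P (∅ : Set α) := by
  rintro ⟨φ, -, hφ, -⟩
  obtain ⟨x⟩ := ‹Nonempty P›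
  exact hφ x

variable (P) in
lemma exists_pSaturated [Finite α] [Nonempty P] :
    ∃ F : Set α, PSaturated P F := by
  obtain ⟨F, hF⟩ := Set.Finite.exists_maximal (s := {F : Set α | PFree P F}) (Set.toFinite _)
    ⟨∅, pFree_empty⟩
  exact ⟨F, hF.prop, fun g hg => by_contra fun hfree =>
    hg (hF.2 hfree (Set.subset_insert g F) (Set.mem_insert g F))⟩

end InducedCopy

section Drop

variable {t n : ℕ} {i : Fin (n + 1)} {F : Set (Fin (n + 1) → Fin t)}

lemma le_iff_drop_le_and_le {f f' : Fin (n + 1) → Fin t} :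
    f ≤ f' ↔ drop i f ≤ drop i f' ∧ f i ≤ f' i :=
  (Fin.forall_iff_succAbove i).trans and_comm

lemma drop_le_drop_iff {f f' : Fin (n + 1) → Fin t} :
    drop i f ≤ drop i f' ↔ ∀ x, x ≠ i → f x ≤ f' x := by
  refine ⟨fun h x hx => ?_, fun h k => h _ (Fin.succAbove_ne i k)⟩
  obtain ⟨k, rfl⟩ := Fin.exists_succAbove_eq hx
  exact h k

lemma not_separating_iff :
    ¬ Separating F i ↔ ∀ f ∈ F, ∀ f' ∈ F, drop i f ≤ drop i f' → f i ≤ f' i := by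
  simp only [Separating, ← drop_le_drop_iff, not_exists, not_and, not_lt]
  refine ⟨fun h f hf f' hf' hle => ?_, fun h f hf f' hf' _ hle => h f hf f' hf' hle⟩
  rcases eq_or_ne f f' with rfl | hne
  · exact le_rfl
  · exact h f hf f' hf' hne hle

lemma drop_le_drop_iff_of_not_separating (hns : ¬ Separating F i) :
    ∀ f ∈ F, ∀ f' ∈ F, drop i f ≤ drop i f' ↔ f ≤ f' :=
  fun f hf f' hf' => ⟨fun hle => le_iff_drop_le_and_le.mpr
    ⟨hle, not_separating_iff.mp hns f hf f' hf' hle⟩, fun hle => (le_iff_drop_le_and_le.mp hle).1⟩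

lemma exists_not_separating {m : ℕ} {F : Set (Fin m → Fin t)}
    (hF : F.ncard * F.ncard < m) : ∃ i, ¬ Separating F i := by
  by_contra! hsep
  choose f hf f' hf' _ hle hlt using hsep
  have hinj : Set.InjOn (fun i => (f i, f' i)) Set.univ := by
    intro i _ j _ hij
    obtain ⟨hfij, hf'ij⟩ := Prod.mk.inj hij
    by_contra hne
    have := hle i j (Ne.symm hne)
    rw [hfij, hf'ij] at this
    exact (hlt j).not_ge this
  have := Set.ncard_le_ncard_of_injOn _ (fun i _ => Set.mk_mem_prod (hf i) (hf' i)) hinj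
    (F.toFinite.prod F.toFinite)
  rw [Set.ncard_univ, Nat.card_fin, Set.ncard_prod] at this
  omega

lemma exists_lift_value [NeZero t] (hns : ¬ Separating F i) (h : Fin n → Fin t) :
    ∃ c, (∀ f ∈ F, drop i f ≤ h → f i ≤ c) ∧ (∀ f ∈ F, h ≤ drop i f → c ≤ f i) := by
  classical
  let value : (Fin (n + 1) → Fin t) → Fin t := fun f => f i
  refine ⟨(Finset.univ.filter fun f => f ∈ F ∧ drop i f ≤ h).sup value,
    fun f hf hfh => Finset.le_sup (f := value) (by simp [hf, hfh]),
    fun f hf hhf => Finset.sup_le fun f₀ hf₀ => ?_⟩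
  simp only [Finset.mem_filter, Finset.mem_univ, true_and] at hf₀
  exact not_separating_iff.mp hns f₀ hf₀.1 f hf (hf₀.2.trans hhf)

lemma drop_insertNth (c : Fin t) (h : Fin n → Fin t) : drop i (i.insertNth c h) = h := by
  funext x
  simp [drop]

lemma not_separating_insert_insertNth (hns : ¬ Separating F i) {c : Fin t}
    {h : Fin n → Fin t} (hbelow : ∀ f ∈ F, drop i f ≤ h → f i ≤ c)
    (habove : ∀ f ∈ F, h ≤ drop i f → c ≤ f i) :
    ¬ Separating (insert (i.insertNth c h) F) i := by
  rw [not_separating_iff] at hns ⊢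
  simp only [Set.forall_mem_insert, drop_insertNth, Fin.insertNth_apply_same]
  exact ⟨⟨fun _ => le_rfl, habove⟩, fun f hf => ⟨hbelow f hf, hns f hf⟩⟩

theorem PSaturated.image_drop [NeZero t] {P : Type} [PartialOrder P] (hF : PSaturated P F)
    (hns : ¬ Separating F i) : PSaturated P (drop i '' F) := by
  refine ⟨fun hcopy => hF.1 ((inducedCopy_image_iff
    (drop_le_drop_iff_of_not_separating hns)).mp hcopy), fun h hh => ?_⟩
  obtain ⟨c, hbelow, habove⟩ := exists_lift_value hns h
  have hcopy := hF.2 (i.insertNth c h) fun hmem => hh ⟨_, hmem, drop_insertNth c h⟩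
  rwa [← inducedCopy_image_iff (drop_le_drop_iff_of_not_separating
      (not_separating_insert_insertNth hns hbelow habove)),
    Set.image_insert_eq, drop_insertNth] at hcopy

end Drop

section SatStar

variable {t n : ℕ} {P : Type} [PartialOrder P]

lemma satStar_le_ncard {F : Set (Fin n → Fin t)} (hF : PSaturated P F) :
    satStar t n P ≤ F.ncard :=
  Nat.sInf_le ⟨F, hF, rfl⟩

lemma exists_pSaturated_ncard_eq_satStar [Nonempty P] :
    ∃ F : Set (Fin n → Fin t), PSaturated P F ∧ F.ncard = satStar t n P := by
  obtain ⟨F, hF⟩ := exists_pSaturated (α := Fin n → Fin t) P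
  exact Nat.sInf_mem (s := {m | ∃ F : Set (Fin n → Fin t), PSaturated P F ∧ F.ncard = m})
    ⟨F.ncard, F, hF, rfl⟩

lemma satStar_of_isEmpty [IsEmpty P] : satStar t n P = 0 := by
  simp [satStar, PSaturated, PFree, inducedCopy_of_isEmpty]

lemma satStar_le_satStar_succ [NeZero t] [Nonempty P]
    (hn : satStar t (n + 1) P * satStar t (n + 1) P ≤ n) :
    satStar t n P ≤ satStar t (n + 1) P := by
  obtain ⟨F, hF, hcard⟩ := exists_pSaturated_ncard_eq_satStar (t := t) (n := n + 1) (P := P)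
  obtain ⟨i, hi⟩ := exists_not_separating (F := F) (by rw [hcard]; omega)
  calc satStar t n P ≤ (drop i '' F).ncard := satStar_le_ncard (hF.image_drop hi)
    _ = F.ncard :=
      (injOn_of_forall_le_iff (drop_le_drop_iff_of_not_separating hi)).ncard_image
    _ = satStar t (n + 1) P := hcard

end SatStar

lemma Nat.eventuallyConst_of_le_succ {f : ℕ → ℕ} {a : ℕ}
    (hf : ∀ n, a ≤ n → f n ≤ f (n + 1)) (hbdd : BddAbove (Set.range f)) :
    EventuallyConst f atTop := by
  have hmono : Monotone fun n => f (n + a) :=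
    monotone_nat_of_le_succ fun n => by simpa [Nat.add_right_comm] using hf (n + a) (by omega)
  have hlim := tendsto_atTop_ciSup hmono (hbdd.mono (Set.range_comp_subset_range _ f))
  rw [nhds_discrete, Filter.tendsto_add_atTop_iff_nat] at hlim
  exact .of_tendsto hlim

theorem stmt15_general (t : ℕ) (ht : 2 ≤ t) (P : Type) [PartialOrder P]
    (hbd : ∃ C : ℕ, ∀ n : ℕ, satStar t n P ≤ C) :
    ∃ N : ℕ, ∀ m n : ℕ, N < m → N < n → satStar t m P = satStar t n P := by
  obtain ⟨C, hC⟩ := hbd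
  rcases isEmpty_or_nonempty P with hP | hP
  · exact ⟨0, fun m n _ _ => by rw [satStar_of_isEmpty, satStar_of_isEmpty]⟩
  have : NeZero t := ⟨by omega⟩
  have hconst : EventuallyConst (fun n => satStar t n P) atTop :=
    Nat.eventuallyConst_of_le_succ (a := C * C)
      (fun n hn => satStar_le_satStar_succ ((Nat.mul_le_mul (hC _) (hC _)).trans hn))
      ⟨C, Set.forall_mem_range.mpr hC⟩
  obtain ⟨N, hN⟩ := eventuallyConst_atTop.mp hconst
  exact ⟨N, fun m n hm hn => (hN m hm.le).trans (hN n hn.le).symm⟩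

theorem stmt15 (t : ℕ) (ht : 2 ≤ t) (P : Type) [PartialOrder P] [Finite P]
    (hbd : ∃ C : ℕ, ∀ n : ℕ, satStar t n P ≤ C) :
    ∃ N : ℕ, ∀ m n : ℕ, N < m → N < n → satStar t m P = satStar t n P :=
  stmt15_general t ht P hbd
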